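/- Let i = (i_1, …, i_m) be a word. The map Φ sending (F^0, …, F^m) ∈ BS^i to the tuple (V_1, …, V_m) with V_k = F^k(i_k) is injective, and its image is exactly the set of tuples (V_1, …, V_m) of ℂ-subspaces of V such that for every 1 ≤ k ≤ m: dim V_k = i_k and W_k^− ⊆ V_k ⊆ W_k^+, where W_k^− is defined to be V_j for the largest index j < k with i_j = i_k − 1 (and W_k^− = E(i_k − 1) if no such j exists), and W_k^+ is defined to be V_j for the largest index j < k with i_j = i_k + 1 (and W_k^+ = E(i_k + 1) if no such j exists). -/

import Mathlib

/-! A point of `BS^i` is recovered from its image under `Φ` by replaying the word: `F^K(a)` is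
the subspace `V_j` written last at position `a` by one of the first `K` letters, or `E(a)` if no
letter wrote there. This gives injectivity, and it shows that the only inclusions a step `k`
adds to the flag are `F^k(i_k - 1) ⊆ V_k ⊆ F^k(i_k + 1)`, whose left and right sides are
`W_k^-` and `W_k^+`. -/

noncomputable section

/-- The coordinate subspace `span{e₁, …, e_k}` of `ℂⁿ` (standard basis `eᵢ = Pi.single i 1`). -/
def stdSub (n k : ℕ) : Submodule ℂ (Fin n → ℂ) :=
  Submodule.span ℂ {v : Fin n → ℂ | ∃ t : Fin n, (t : ℕ) < k ∧ v = Pi.single t 1}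

/-- A complete flag in `ℂⁿ`: a monotone function `{0,…,n} → Submodule ℂ ℂⁿ`
with `dim F(k) = k`. -/
def IsCompleteFlag (n : ℕ) (F : Fin (n + 1) → Submodule ℂ (Fin n → ℂ)) : Prop :=
  Monotone F ∧ ∀ k : Fin (n + 1), Module.finrank ℂ (F k) = (k : ℕ)

/-- The standard flag `E(k) = span{e₁, …, e_k}`. -/
def stdFlag (n : ℕ) : Fin (n + 1) → Submodule ℂ (Fin n → ℂ) := fun k => stdSub n (k : ℕ)

/-- Magyar's description of the Bott–Samelson set `BS^i` for a word `i = (i_1, …, i_m)`: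
sequences of complete flags `(F^0, …, F^m)` with `F^0 = E` the standard flag, and for each
`1 ≤ k ≤ m`, `F^k(a) = F^{k-1}(a)` for all `a ≠ i_k`.  (The word is indexed so that
`i ⟨k⟩` for `k : Fin m` is the letter `i_{k+1}`.) -/
def InBS (n m : ℕ) (i : Fin m → ℕ)
    (F : Fin (m + 1) → Fin (n + 1) → Submodule ℂ (Fin n → ℂ)) : Prop :=
  (∀ k, IsCompleteFlag n (F k)) ∧ F 0 = stdFlag n ∧
    ∀ k : Fin m, ∀ a : Fin (n + 1), (a : ℕ) ≠ i k → F k.succ a = F k.castSucc a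

open Function

section LastWrite

variable {α : Type*} {m : ℕ} (i : Fin m → ℕ) (E : ℕ → α) (V : Fin m → α)

/-- Start from `E` and, for `k = 0, 1, …`, write `V k` at position `i k`; `lastWrite i E V K` is
the state after the first `K` letters (all of them once `K ≥ m`). -/
def lastWrite : ℕ → ℕ → α
  | 0 => E
  | K + 1 => if h : K < m then update (lastWrite K) (i ⟨K, h⟩) (V ⟨K, h⟩) else lastWrite K

lemma lastWrite_succ (k : Fin m) :
    lastWrite i E V (k + 1) = update (lastWrite i E V k) (i k) (V k) := by
  simp [lastWrite, k.isLt]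

variable {i E V}

lemma lastWrite_of_forall_ne {K c : ℕ} (h : ∀ j : Fin m, (j : ℕ) < K → i j ≠ c) :
    lastWrite i E V K c = E c := by
  induction K with
  | zero => rfl
  | succ K ih =>
    have ih' := ih fun j hj => h j (by omega)
    by_cases hK : K < m
    · rw [lastWrite_succ i E V ⟨K, hK⟩, update_of_ne (h ⟨K, hK⟩ (by simp)).symm, ih']
    · simpa [lastWrite, hK] using ih'

lemma lastWrite_of_isLast {K c : ℕ} {j : Fin m} (hjK : (j : ℕ) < K) (hj : i j = c)
    (hlast : ∀ j' : Fin m, j < j' → (j' : ℕ) < K → i j' ≠ c) :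
    lastWrite i E V K c = V j := by
  induction K with
  | zero => omega
  | succ K ih =>
    obtain rfl | hjK := (Nat.lt_succ_iff_lt_or_eq.mp hjK).symm
    · rw [lastWrite_succ, ← hj, update_self]
    have ih' := ih hjK fun j' h1 h2 => hlast j' h1 (by omega)
    by_cases hK : K < m
    · have hne : i ⟨K, hK⟩ ≠ c := hlast ⟨K, hK⟩ hjK (by simp)
      rw [lastWrite_succ i E V ⟨K, hK⟩, update_of_ne hne.symm, ih']
    · simpa [lastWrite, hK] using ih'

lemma pred_lastWrite_iff (p : α → Prop) (k : Fin m) (c : ℕ) :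
    p (lastWrite i E V k c) ↔
      (∃ j : Fin m, j < k ∧ i j = c ∧ (∀ j' : Fin m, j < j' → j' < k → i j' ≠ c) ∧ p (V j)) ∨
        ((∀ j : Fin m, j < k → i j ≠ c) ∧ p (E c)) := by
  classical
  constructor
  · intro hp
    by_cases hex : ∃ j : Fin m, j < k ∧ i j = c
    · obtain ⟨j, hj, hmax⟩ := Finset.exists_max_image {j | j < k ∧ i j = c} id
        (by simpa [Finset.Nonempty] using hex)
      simp only [Finset.mem_filter_univ, id] at hj hmax
      have hlast : ∀ j' : Fin m, j < j' → j' < k → i j' ≠ c :=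
        fun j' h1 h2 h3 => (hmax j' ⟨h2, h3⟩).not_gt h1
      rw [lastWrite_of_isLast hj.1 hj.2 hlast] at hp
      exact .inl ⟨j, hj.1, hj.2, hlast, hp⟩
    · push Not at hex
      rw [lastWrite_of_forall_ne hex] at hp
      exact .inr ⟨hex, hp⟩
  · rintro (⟨j, hjk, hj, hlast, hp⟩ | ⟨hnone, hp⟩)
    · rwa [lastWrite_of_isLast hjk hj hlast]
    · rwa [lastWrite_of_forall_ne hnone]

lemma lastWrite_induction {P : ℕ → α → Prop} (hE : ∀ a, P a (E a)) (hV : ∀ k, P (i k) (V k))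
    (K a : ℕ) : P a (lastWrite i E V K a) := by
  induction K generalizing a with
  | zero => exact hE a
  | succ K ih =>
    by_cases hK : K < m
    · rw [lastWrite_succ i E V ⟨K, hK⟩]
      by_cases ha : a = i ⟨K, hK⟩
      · subst ha
        rw [update_self]
        exact hV _
      · rw [update_of_ne ha]
        exact ih a
    · simpa [lastWrite, hK] using ih a

lemma monotone_lastWrite [Preorder α] (hE : Monotone E)
    (hlow : ∀ k : Fin m, lastWrite i E V k (i k - 1) ≤ V k)
    (hup : ∀ k : Fin m, V k ≤ lastWrite i E V k (i k + 1)) (K : ℕ) :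
    Monotone (lastWrite i E V K) := by
  induction K with
  | zero => exact hE
  | succ K ih =>
    by_cases hK : K < m
    · set k : Fin m := ⟨K, hK⟩
      refine monotone_nat_of_le_succ fun a => ?_
      rw [lastWrite_succ i E V k]
      by_cases ha : a = i k
      · subst ha
        rw [update_self, update_of_ne (by omega)]
        exact hup k
      by_cases ha' : a + 1 = i k
      · have hlow_k := hlow k
        rw [← ha', Nat.add_sub_cancel] at hlow_k
        rwa [← ha', update_self, update_of_ne (by omega)]
      rw [update_of_ne ha, update_of_ne ha']
      exact ih (Nat.le_succ a)
    · simpa [lastWrite, hK] using ih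

end LastWrite

lemma stdSub_mono (n : ℕ) : Monotone (stdSub n) := fun _ _ h =>
  Submodule.span_mono fun _ => by
    rintro ⟨t, ht, rfl⟩
    exact ⟨t, ht.trans_le h, rfl⟩

lemma finrank_stdSub {n a : ℕ} (h : a ≤ n) : Module.finrank ℂ (stdSub n a) = a := by
  classical
  have hrange : {v : Fin n → ℂ | ∃ t : Fin n, (t : ℕ) < a ∧ v = Pi.single t 1} =
      Set.range fun t : {t : Fin n // (t : ℕ) < a} => Pi.basisFun ℂ (Fin n) t := by
    ext v
    simp [eq_comm]
  have hli : LinearIndependent ℂ fun t : {t : Fin n // (t : ℕ) < a} => Pi.basisFun ℂ (Fin n) t :=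
    (Pi.basisFun ℂ (Fin n)).linearIndependent.comp _ Subtype.val_injective
  rw [stdSub, hrange, finrank_span_eq_card hli, Fintype.card_subtype, Fin.card_filter_val_lt]
  omega

section BottSamelson

variable {n m : ℕ} {i : Fin m → ℕ} {F : Fin (m + 1) → Fin (n + 1) → Submodule ℂ (Fin n → ℂ)}

lemma InBS.apply_eq_lastWrite (hik : ∀ k, i k < n + 1) (hF : InBS n m i F)
    (K : Fin (m + 1)) (a : Fin (n + 1)) :
    F K a = lastWrite i (stdSub n) (fun k => F k.succ ⟨i k, hik k⟩) K a := by
  induction K using Fin.induction generalizing a with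
  | zero => rw [hF.2.1]; rfl
  | succ k ih =>
    rw [Fin.val_succ, lastWrite_succ]
    by_cases ha : (a : ℕ) = i k
    · obtain rfl : a = ⟨i k, hik k⟩ := Fin.ext ha
      rw [update_self]
    · rw [hF.2.2 k a ha, ih, update_of_ne ha]
      rfl

lemma InBS.lastWrite_le_and_le (hi : ∀ k, 1 ≤ i k ∧ i k ≤ n - 1) (hF : InBS n m i F)
    (k : Fin m) :
    let V : Fin m → Submodule ℂ (Fin n → ℂ) := fun k => F k.succ ⟨i k, by grind⟩
    lastWrite i (stdSub n) V k (i k - 1) ≤ V k ∧ V k ≤ lastWrite i (stdSub n) V k (i k + 1) := by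
  intro V
  have hik : ∀ k, i k < n + 1 := by grind
  have hF_eq (c : ℕ) (hc : c < n + 1) (hck : c ≠ i k) :
      F k.succ ⟨c, hc⟩ = lastWrite i (stdSub n) V k c := by
    rw [hF.2.2 k _ hck, hF.apply_eq_lastWrite hik]
    rfl
  have hmono := (hF.1 k.succ).1
  constructor
  · rw [← hF_eq (i k - 1) (by grind) (by grind)]
    exact hmono (Fin.mk_le_mk.mpr (by omega))
  · rw [← hF_eq (i k + 1) (by grind) (by omega)]
    exact hmono (Fin.mk_le_mk.mpr (by omega))

lemma inBS_lastWrite {V : Fin m → Submodule ℂ (Fin n → ℂ)}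
    (hdim : ∀ k, Module.finrank ℂ (V k) = i k)
    (hlow : ∀ k : Fin m, lastWrite i (stdSub n) V k (i k - 1) ≤ V k)
    (hup : ∀ k : Fin m, V k ≤ lastWrite i (stdSub n) V k (i k + 1)) :
    InBS n m i fun K a => lastWrite i (stdSub n) V K a := by
  refine ⟨fun K => ⟨?_, fun a => ?_⟩, rfl, fun k a ha => ?_⟩
  · exact (monotone_lastWrite (stdSub_mono n) hlow hup K).comp Fin.val_strictMono.monotone
  · exact lastWrite_induction
      (P := fun a (W : Submodule ℂ (Fin n → ℂ)) => a ≤ n → Module.finrank ℂ W = a)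
      (fun _ => finrank_stdSub) (fun k _ => hdim k) K a (by omega)
  · simp only [Fin.val_succ, lastWrite_succ, Fin.val_castSucc]
    exact update_of_ne ha _ _

end BottSamelson

theorem stmt1 (n m : ℕ) (i : Fin m → ℕ)
    (hi : ∀ t, 1 ≤ i t ∧ i t ≤ n - 1) :
    let Φ : (Fin (m + 1) → Fin (n + 1) → Submodule ℂ (Fin n → ℂ)) →
        (Fin m → Submodule ℂ (Fin n → ℂ)) :=
      fun F k => F k.succ ⟨i k, by have := (hi k).2; omega⟩
    Set.InjOn Φ {F | InBS n m i F} ∧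
      Φ '' {F | InBS n m i F} =
        {V : Fin m → Submodule ℂ (Fin n → ℂ) |
          ∀ k : Fin m,
            Module.finrank ℂ (V k) = i k ∧
            ((∃ j : Fin m, j < k ∧ i j = i k - 1 ∧
                (∀ j' : Fin m, j < j' → j' < k → i j' ≠ i k - 1) ∧ V j ≤ V k) ∨
              ((∀ j : Fin m, j < k → i j ≠ i k - 1) ∧ stdSub n (i k - 1) ≤ V k)) ∧
            ((∃ j : Fin m, j < k ∧ i j = i k + 1 ∧
                (∀ j' : Fin m, j < j' → j' < k → i j' ≠ i k + 1) ∧ V k ≤ V j) ∨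
              ((∀ j : Fin m, j < k → i j ≠ i k + 1) ∧ V k ≤ stdSub n (i k + 1)))} := by
  intro Φ
  have hik : ∀ k, i k < n + 1 := by grind
  refine ⟨fun F hF G hG hFG => ?_, Set.ext fun V => ⟨?_, fun hV => ?_⟩⟩
  · funext K a
    rw [InBS.apply_eq_lastWrite hik hF, InBS.apply_eq_lastWrite hik hG]
    exact congrFun (congrArg (lastWrite i (stdSub n) · K) hFG) a
  · rintro ⟨F, hF, rfl⟩ k
    obtain ⟨hlow, hup⟩ := hF.lastWrite_le_and_le hi k
    exact ⟨(hF.1 k.succ).2 _, (pred_lastWrite_iff (· ≤ Φ F k) k _).1 hlow,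
      (pred_lastWrite_iff (Φ F k ≤ ·) k _).1 hup⟩
  · refine ⟨_, inBS_lastWrite (fun k => (hV k).1)
      (fun k => (pred_lastWrite_iff (· ≤ V k) k _).2 (hV k).2.1)
      (fun k => (pred_lastWrite_iff (V k ≤ ·) k _).2 (hV k).2.2), funext fun k => ?_⟩
    simp [Φ, lastWrite_succ]
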